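/- For a Class A channel (Q_i(b_i|b^{i-1},a_i)) on finite alphabets, the supremum of directed information I(A^n → B^n) over all feedback input kernels P_i(a_i|a^{i-1},b^{i-1}) is attained in (equals the supremum over) the subclass of kernels satisfying the conditional independence P_i(a_i|a^{i-1},b^{i-1}) = π_i(a_i|b^{i-1}) for all i, that is, sup over the full class equals sup over the restricted class, and for restricted inputs I(A^n→B^n) = ∑_{i=0}^n I(A_i; B_i | B^{i-1}). -/

import Mathlib

open Finset

/-- Time indices `j ≤ i`. -/
def idxLe (n : ℕ) (i : Fin (n+1)) : Finset (Fin (n+1)) :=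
  Finset.univ.filter fun j => (j : ℕ) ≤ (i : ℕ)

/-- Time indices `j < i`. -/
def idxLt (n : ℕ) (i : Fin (n+1)) : Finset (Fin (n+1)) :=
  Finset.univ.filter fun j => (j : ℕ) < (i : ℕ)

/-- Time indices `i - M ≤ j < i` (the window of the last `M` outputs). -/
def idxWin (n : ℕ) (i : Fin (n+1)) (M : ℕ) : Finset (Fin (n+1)) :=
  Finset.univ.filter fun j => (j : ℕ) < (i : ℕ) ∧ (i : ℕ) ≤ (j : ℕ) + M

variable {n : ℕ} {A B : Type} [Fintype A] [Fintype B] [DecidableEq A] [DecidableEq B]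

/-- Marginal of the joint pmf `μ` on the `A`-coordinates in `SA` and the
`B`-coordinates in `SB`, evaluated at `(a, b)`. -/
noncomputable def marg (μ : (Fin (n+1) → A) → (Fin (n+1) → B) → ℝ)
    (SA SB : Finset (Fin (n+1))) (a : Fin (n+1) → A) (b : Fin (n+1) → B) : ℝ :=
  ∑ a' : Fin (n+1) → A, ∑ b' : Fin (n+1) → B,
    if (∀ j ∈ SA, a' j = a j) ∧ (∀ j ∈ SB, b' j = b j) then μ a' b' else 0

/-- Marginal of `μ` on `B`-coordinates in `SB`. -/
noncomputable def margB (μ : (Fin (n+1) → A) → (Fin (n+1) → B) → ℝ)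
    (SB : Finset (Fin (n+1))) (b : Fin (n+1) → B) : ℝ :=
  ∑ a' : Fin (n+1) → A, ∑ b' : Fin (n+1) → B,
    if ∀ j ∈ SB, b' j = b j then μ a' b' else 0

/-- The induced conditional output pmf `Π_i(b_i | b^{i-1})`. -/
noncomputable def outCond (μ : (Fin (n+1) → A) → (Fin (n+1) → B) → ℝ)
    (i : Fin (n+1)) (b : Fin (n+1) → B) : ℝ :=
  margB μ (idxLe n i) b / margB μ (idxLt n i) b

/-- Conditional mutual information `I(A_{TA}; B_i | B_{SB})` under `μ`
(terms with zero joint probability vanish). -/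
noncomputable def cmi (μ : (Fin (n+1) → A) → (Fin (n+1) → B) → ℝ)
    (TA : Finset (Fin (n+1))) (i : Fin (n+1)) (SB : Finset (Fin (n+1))) : ℝ :=
  ∑ a : Fin (n+1) → A, ∑ b : Fin (n+1) → B,
    μ a b * Real.log (marg μ TA (insert i SB) a b * marg μ ∅ SB a b /
      (marg μ TA SB a b * marg μ ∅ (insert i SB) a b))

/-- Directed information `I(A^n → B^n) = ∑_i I(A^i; B_i | B^{i-1})`. -/
noncomputable def DI (μ : (Fin (n+1) → A) → (Fin (n+1) → B) → ℝ) : ℝ :=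
  ∑ i : Fin (n+1), cmi μ (idxLe n i) i (idxLt n i)

/-- A family of channel kernels `Q_i(b_i | b^{i-1}, a^i)`: nonnegative, summing to one
over `b_i`, and depending only on `(a^i, b^i)`. -/
def IsChannel (Q : Fin (n+1) → (Fin (n+1) → A) → (Fin (n+1) → B) → ℝ) : Prop :=
  (∀ i a b, 0 ≤ Q i a b) ∧
  (∀ i a b, ∑ x : B, Q i a (Function.update b i x) = 1) ∧
  (∀ (i : Fin (n+1)) (a a' : Fin (n+1) → A) (b b' : Fin (n+1) → B),
    (∀ j : Fin (n+1), (j:ℕ) ≤ (i:ℕ) → a j = a' j) →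
    (∀ j : Fin (n+1), (j:ℕ) ≤ (i:ℕ) → b j = b' j) → Q i a b = Q i a' b')

/-- A family of feedback input kernels `P_i(a_i | a^{i-1}, b^{i-1})`: nonnegative,
summing to one over `a_i`, and depending only on `(a^i, b^{i-1})`. -/
def IsInput (P : Fin (n+1) → (Fin (n+1) → A) → (Fin (n+1) → B) → ℝ) : Prop :=
  (∀ i a b, 0 ≤ P i a b) ∧
  (∀ i a b, ∑ x : A, P i (Function.update a i x) b = 1) ∧
  (∀ (i : Fin (n+1)) (a a' : Fin (n+1) → A) (b b' : Fin (n+1) → B),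
    (∀ j : Fin (n+1), (j:ℕ) ≤ (i:ℕ) → a j = a' j) →
    (∀ j : Fin (n+1), (j:ℕ) < (i:ℕ) → b j = b' j) → P i a b = P i a' b')

/-- The joint pmf induced by channel kernels `Q` and input kernels `P`. -/
noncomputable def joint (Q P : Fin (n+1) → (Fin (n+1) → A) → (Fin (n+1) → B) → ℝ)
    (a : Fin (n+1) → A) (b : Fin (n+1) → B) : ℝ :=
  ∏ i : Fin (n+1), Q i a b * P i a b


/-!
For a Class A channel, `Q_i` sees the inputs only through `a_i`. Summing out the future
shows `P(A_T = a_T, B^i = b^i) = Q_i(b_i | b^{i-1}, a_i) · P(A_T = a_T, B^{i-1} = b^{i-1})`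
whenever `i ∈ T ⊆ [0, i]`, so `Q_i` cancels in the ratio defining `I(A^i; B_i | B^{i-1})` exactly
as in the one defining `I(A_i; B_i | B^{i-1})`: the two terms agree, and the latter depends only
on the law of `(A_i, B^i)`.

Given any feedback input `P`, let `π_i(a_i | b^{i-1})` be the conditional law of `A_i` given
`B^{i-1}` under `P`. Then `P(A_i = a_i, B^{i-1} = b^{i-1}) = π_i(a_i | b^{i-1}) P(B^{i-1} = b^{i-1})`
holds both under `P` and under the restricted input `π`, so by induction on `i` the two inputs
induce the same laws of `B^{i-1}` and of `(A_i, B^i)`, hence the same directed information.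
The two sets of achievable values therefore coincide.
-/

open Function

section FiniteSums

variable {ι X : Type*} [Fintype ι] [DecidableEq ι] [Fintype X] [DecidableEq X]

theorem sum_filter_comp_update (m : ι) (x₀ x : X) (H : (ι → X) → ℝ) :
    ∑ g with g m = x₀, H (update g m x) = ∑ g with g m = x, H g := by
  refine Finset.sum_nbij' (update · m x) (update · m x₀) ?_ ?_ ?_ ?_ (fun _ _ => rfl) <;>
    intro g hg <;> simp_all

theorem sum_mul_eq_sum_ite_of_sum_update_eq_one (m : ι) (x₀ : X) {F w : (ι → X) → ℝ}
    (hF : ∀ g x, F (update g m x) = F g) (hw : ∀ g, ∑ x, w (update g m x) = 1) :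
    ∑ g, F g * w g = ∑ g, if g m = x₀ then F g else 0 := by
  calc ∑ g, F g * w g = ∑ x, ∑ g with g m = x, F g * w g := (Finset.sum_fiberwise _ _ _).symm
    _ = ∑ x, ∑ g with g m = x₀, F g * w (update g m x) := by
        refine Finset.sum_congr rfl fun x _ => ?_
        rw [← sum_filter_comp_update m x₀ x]
        simp only [hF]
    _ = ∑ g with g m = x₀, F g := by
        rw [Finset.sum_comm]
        simp only [← Finset.mul_sum, hw, mul_one]
    _ = _ := Finset.sum_filter _ _

end FiniteSums

theorem sum_mul_eq_sum_mul_of_sum_fiber_eq {X Y : Type*} [Fintype X] [DecidableEq Y] (p : X → Y)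
    {μ μ' f : X → ℝ} (hf : ∀ x y, p x = p y → f x = f y)
    (hμ : ∀ x, ∑ y with p y = p x, μ y = ∑ y with p y = p x, μ' y) :
    ∑ x, μ x * f x = ∑ x, μ' x * f x := by
  have fiber (ν : X → ℝ) (x : X) :
      ∑ y with p y = p x, ν y * f y = (∑ y with p y = p x, ν y) * f x := by
    rw [Finset.sum_mul]
    exact Finset.sum_congr rfl fun y hy => by rw [hf y x (Finset.mem_filter.1 hy).2]
  rw [← Finset.sum_image' (f := fun y => ∑ x with p x = y, μ x * f x) _ fun _ _ => rfl,
    ← Finset.sum_image' (f := fun y => ∑ x with p x = y, μ' x * f x) _ fun _ _ => rfl]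
  refine Finset.sum_congr rfl fun y hy => ?_
  obtain ⟨x, -, rfl⟩ := Finset.mem_image.1 hy
  rw [fiber, fiber, hμ]

def DependsOnly {ι α β : Type*} (SA SB : Finset ι) (f : (ι → α) → (ι → β) → ℝ) : Prop :=
  ∀ ⦃a a' b b'⦄, (∀ j ∈ SA, a j = a' j) → (∀ j ∈ SB, b j = b' j) → f a b = f a' b'

namespace DependsOnly

variable {ι α β : Type*} {SA SB SA' SB' : Finset ι} {f g : (ι → α) → (ι → β) → ℝ}

theorem mono (hf : DependsOnly SA SB f) (hA : SA ⊆ SA') (hB : SB ⊆ SB') :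
    DependsOnly SA' SB' f :=
  fun _ _ _ _ ha hb => hf (fun j hj => ha j (hA hj)) (fun j hj => hb j (hB hj))

theorem mul (hf : DependsOnly SA SB f) (hg : DependsOnly SA SB g) :
    DependsOnly SA SB (fun a b => f a b * g a b) :=
  fun _ _ _ _ ha hb => congrArg₂ _ (hf ha hb) (hg ha hb)

theorem prod {κ : Type*} {s : Finset κ} {F : κ → (ι → α) → (ι → β) → ℝ}
    (hF : ∀ k ∈ s, DependsOnly SA SB (F k)) :
    DependsOnly SA SB (fun a b => ∏ k ∈ s, F k a b) :=
  fun _ _ _ _ ha hb => Finset.prod_congr rfl fun k hk => hF k hk ha hb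

variable [DecidableEq ι]

theorem update_left (hf : DependsOnly SA SB f) {m : ι} (hm : m ∉ SA) (a : ι → α) (x : α)
    (b : ι → β) : f (update a m x) b = f a b :=
  hf (fun _ hj => update_of_ne (ne_of_mem_of_not_mem hj hm) _ _) (fun _ _ => rfl)

theorem update_right (hf : DependsOnly SA SB f) {m : ι} (hm : m ∉ SB) (a : ι → α) (b : ι → β)
    (y : β) : f a (update b m y) = f a b :=
  hf (fun _ _ => rfl) (fun _ hj => update_of_ne (ne_of_mem_of_not_mem hj hm) _ _)

end DependsOnly

theorem forall_mem_insert_eq_update_iff {ι X : Type*} [DecidableEq ι] {S : Finset ι} {i : ι}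
    (hi : i ∉ S) (g g' : ι → X) (x : X) :
    (∀ j ∈ insert i S, g' j = update g i x j) ↔ g' i = x ∧ ∀ j ∈ S, g' j = g j := by
  simp only [Finset.forall_mem_insert, update_self]
  refine and_congr_right fun _ => forall₂_congr fun j hj => ?_
  rw [update_of_ne (ne_of_mem_of_not_mem hj hi)]

theorem mem_idxLe {i j : Fin (n+1)} : j ∈ idxLe n i ↔ (j : ℕ) ≤ i := by simp [idxLe]

theorem mem_idxLt {i j : Fin (n+1)} : j ∈ idxLt n i ↔ (j : ℕ) < i := by simp [idxLt]

theorem insert_idxLt (i : Fin (n+1)) : insert i (idxLt n i) = idxLe n i := by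
  ext j
  simp only [Finset.mem_insert, mem_idxLt, mem_idxLe, Fin.ext_iff]
  omega

theorem self_notMem_idxLt (i : Fin (n+1)) : i ∉ idxLt n i := by simp [mem_idxLt]

theorem prod_idxLe (i : Fin (n+1)) (f : Fin (n+1) → ℝ) :
    ∏ j ∈ idxLe n i, f j = (∏ j ∈ idxLt n i, f j) * f i := by
  rw [← insert_idxLt, Finset.prod_insert (self_notMem_idxLt i), mul_comm]

theorem idxLt_zero : idxLt n 0 = ∅ := by simp [idxLt]

theorem idxLt_succ (i : Fin n) : idxLt n i.succ = idxLe n i.castSucc := by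
  ext j
  simp [mem_idxLt, mem_idxLe]

omit [Fintype A] [Fintype B] in
theorem DependsOnly.ite_eqOn {SA SB S S' : Finset (Fin (n+1))}
    {g : (Fin (n+1) → A) → (Fin (n+1) → B) → ℝ} (hg : DependsOnly SA SB g) (hS : S ⊆ SA)
    (hS' : S' ⊆ SB) (a : Fin (n+1) → A) (b : Fin (n+1) → B) :
    DependsOnly SA SB fun a' b' =>
      if (∀ j ∈ S, a' j = a j) ∧ ∀ j ∈ S', b' j = b j then g a' b' else 0 :=
  fun _ _ _ _ ha hb => if_congr (and_congr (forall₂_congr fun j hj => by rw [ha j (hS hj)])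
    (forall₂_congr fun j hj => by rw [hb j (hS' hj)])) (hg ha hb) rfl

section Marginals

variable {μ μ' : (Fin (n+1) → A) → (Fin (n+1) → B) → ℝ} {SA SB : Finset (Fin (n+1))}

theorem marg_dependsOnly : DependsOnly SA SB (marg μ SA SB) := by
  intro a a' b b' ha hb
  refine Finset.sum_congr rfl fun x _ => Finset.sum_congr rfl fun y _ => if_congr ?_ rfl rfl
  exact and_congr (forall₂_congr fun j hj => by rw [ha j hj])
    (forall₂_congr fun j hj => by rw [hb j hj])

theorem marg_eq_sum_filter (a : Fin (n+1) → A) (b : Fin (n+1) → B) :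
    marg μ SA SB a b = ∑ x : (Fin (n+1) → A) × (Fin (n+1) → B)
      with (SA.restrict x.1, SB.restrict x.2) = (SA.restrict a, SB.restrict b), μ x.1 x.2 := by
  rw [Finset.sum_filter, Fintype.sum_prod_type]
  simp [marg, Prod.ext_iff, funext_iff]

theorem marg_nonneg (hμ : ∀ a b, 0 ≤ μ a b) (a : Fin (n+1) → A) (b : Fin (n+1) → B) :
    0 ≤ marg μ SA SB a b := by
  rw [marg_eq_sum_filter]
  exact Finset.sum_nonneg fun x _ => hμ x.1 x.2

theorem le_marg (hμ : ∀ a b, 0 ≤ μ a b) (a : Fin (n+1) → A) (b : Fin (n+1) → B) :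
    μ a b ≤ marg μ SA SB a b := by
  rw [marg_eq_sum_filter]
  exact Finset.single_le_sum (f := fun x : (Fin (n+1) → A) × (Fin (n+1) → B) => μ x.1 x.2)
    (fun x _ => hμ x.1 x.2) (Finset.mem_filter.2 ⟨Finset.mem_univ (a, b), by simp⟩)

theorem marg_anti (hμ : ∀ a b, 0 ≤ μ a b) {SA' : Finset (Fin (n+1))} (h : SA ⊆ SA')
    (a : Fin (n+1) → A) (b : Fin (n+1) → B) : marg μ SA' SB a b ≤ marg μ SA SB a b := by
  refine Finset.sum_le_sum fun x _ => Finset.sum_le_sum fun y _ => ?_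
  by_cases hc : (∀ j ∈ SA', x j = a j) ∧ ∀ j ∈ SB, y j = b j
  · rw [if_pos hc, if_pos ⟨fun j hj => hc.1 j (h hj), hc.2⟩]
  · rw [if_neg hc]; split <;> simp [hμ]

theorem marg_eq_sum_marg_insert_left {i : Fin (n+1)} (hi : i ∉ SA) (a : Fin (n+1) → A)
    (b : Fin (n+1) → B) :
    marg μ SA SB a b = ∑ x, marg μ (insert i SA) SB (update a i x) b := by
  unfold marg
  conv_rhs => rw [Finset.sum_comm]
  refine Finset.sum_congr rfl fun a' _ => ?_
  conv_rhs => rw [Finset.sum_comm]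
  refine Finset.sum_congr rfl fun b' _ => ?_
  simp only [forall_mem_insert_eq_update_iff hi, ite_and]
  simp

theorem marg_eq_sum_marg_insert_right {i : Fin (n+1)} (hi : i ∉ SB) (a : Fin (n+1) → A)
    (b : Fin (n+1) → B) :
    marg μ SA SB a b = ∑ y, marg μ SA (insert i SB) a (update b i y) := by
  unfold marg
  conv_rhs => rw [Finset.sum_comm]
  refine Finset.sum_congr rfl fun a' _ => ?_
  conv_rhs => rw [Finset.sum_comm]
  refine Finset.sum_congr rfl fun b' _ => ?_
  simp only [forall_mem_insert_eq_update_iff hi, ite_and]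
  simp

theorem sum_mul_eq_of_marg_eq {f : (Fin (n+1) → A) → (Fin (n+1) → B) → ℝ}
    (hf : DependsOnly SA SB f) (h : ∀ a b, marg μ SA SB a b = marg μ' SA SB a b) :
    ∑ a, ∑ b, μ a b * f a b = ∑ a, ∑ b, μ' a b * f a b := by
  simp only [← Fintype.sum_prod_type']
  refine sum_mul_eq_sum_mul_of_sum_fiber_eq (fun x => (SA.restrict x.1, SB.restrict x.2))
    (fun x y hxy => ?_) (fun x => ?_)
  · simp only [Prod.ext_iff, funext_iff, Finset.restrict, Subtype.forall] at hxy
    exact hf hxy.1 hxy.2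
  · rw [← marg_eq_sum_filter, ← marg_eq_sum_filter, h]

theorem marg_congr_of_subset {SA' SB' : Finset (Fin (n+1))} (hA : SA' ⊆ SA) (hB : SB' ⊆ SB)
    (h : ∀ a b, marg μ SA SB a b = marg μ' SA SB a b) (a : Fin (n+1) → A) (b : Fin (n+1) → B) :
    marg μ SA' SB' a b = marg μ' SA' SB' a b := by
  have hind := (show DependsOnly SA SB fun _ _ => (1 : ℝ) from fun _ _ _ _ _ _ => rfl).ite_eqOn
    hA hB a b
  simpa only [marg, mul_ite, mul_one, mul_zero] using sum_mul_eq_of_marg_eq hind h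

theorem cmi_congr {TA SB : Finset (Fin (n+1))} {i : Fin (n+1)}
    (h : ∀ a b, marg μ TA (insert i SB) a b = marg μ' TA (insert i SB) a b) :
    cmi μ TA i SB = cmi μ' TA i SB := by
  have hsub := Finset.subset_insert i SB
  have h₁ := marg_congr_of_subset le_rfl hsub h
  have h₂ := marg_congr_of_subset (Finset.empty_subset TA) hsub h
  have h₃ := marg_congr_of_subset (Finset.empty_subset TA) le_rfl h
  simp only [cmi, ← h, ← h₁, ← h₂, ← h₃]
  refine sum_mul_eq_of_marg_eq (fun a a' b b' ha hb => ?_) h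
  have e {SA' SB'} (hA : SA' ⊆ TA) (hB : SB' ⊆ insert i SB) :
      marg μ SA' SB' a b = marg μ SA' SB' a' b' := (marg_dependsOnly.mono hA hB) ha hb
  rw [e le_rfl le_rfl, e le_rfl hsub, e (Finset.empty_subset _) hsub,
    e (Finset.empty_subset _) le_rfl]

end Marginals

/-- Class A: `Q_i(b_i | b^{i-1}, a^i)` depends on the inputs only through `a_i`. -/
def IsClassA (Q : Fin (n+1) → (Fin (n+1) → A) → (Fin (n+1) → B) → ℝ) : Prop :=
  ∀ (i : Fin (n+1)) (a a' : Fin (n+1) → A) (b b' : Fin (n+1) → B),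
    a i = a' i → (∀ j : Fin (n+1), (j:ℕ) ≤ (i:ℕ) → b j = b' j) → Q i a b = Q i a' b'

section Joint

variable {Q P : Fin (n+1) → (Fin (n+1) → A) → (Fin (n+1) → B) → ℝ}

omit [Fintype A] [DecidableEq A] [DecidableEq B] in
theorem IsChannel.dependsOnly (hQ : IsChannel Q) (i : Fin (n+1)) :
    DependsOnly (idxLe n i) (idxLe n i) (Q i) :=
  fun a a' b b' ha hb => hQ.2.2 i a a' b b' (fun j hj => ha j (mem_idxLe.2 hj))
    (fun j hj => hb j (mem_idxLe.2 hj))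

omit [Fintype B] [DecidableEq A] [DecidableEq B] in
theorem IsInput.dependsOnly (hP : IsInput P) (i : Fin (n+1)) :
    DependsOnly (idxLe n i) (idxLt n i) (P i) :=
  fun a a' b b' ha hb => hP.2.2 i a a' b b' (fun j hj => ha j (mem_idxLe.2 hj))
    (fun j hj => hb j (mem_idxLt.2 hj))

omit [DecidableEq A] [DecidableEq B] in
theorem dependsOnly_kernel (hQ : IsChannel Q) (hP : IsInput P) (i : Fin (n+1)) :
    DependsOnly (idxLe n i) (idxLe n i) fun a b => Q i a b * P i a b :=
  (hQ.dependsOnly i).mul ((hP.dependsOnly i).mono le_rfl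
    (fun _ hj => mem_idxLe.2 (mem_idxLt.1 hj).le))

omit [DecidableEq A] [DecidableEq B] in
theorem dependsOnly_prod_idxLt (hQ : IsChannel Q) (hP : IsInput P) (i : Fin (n+1)) :
    DependsOnly (idxLt n i) (idxLt n i) fun a b => ∏ j ∈ idxLt n i, Q j a b * P j a b := by
  have h : ∀ j ∈ idxLt n i, idxLe n j ⊆ idxLt n i := fun j hj k hk =>
    mem_idxLt.2 ((mem_idxLe.1 hk).trans_lt (mem_idxLt.1 hj))
  exact DependsOnly.prod fun j hj => (dependsOnly_kernel hQ hP j).mono (h j hj) (h j hj)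

omit [DecidableEq A] [DecidableEq B] in
theorem joint_nonneg (hQ : IsChannel Q) (hP : IsInput P) (a : Fin (n+1) → A)
    (b : Fin (n+1) → B) : 0 ≤ joint Q P a b :=
  Finset.prod_nonneg fun i _ => mul_nonneg (hQ.1 i a b) (hP.1 i a b)

theorem sum_mul_kernel_eq_sum_ite (hQ : IsChannel Q) (hP : IsInput P) (m : Fin (n+1))
    {G : (Fin (n+1) → A) → (Fin (n+1) → B) → ℝ} (hG : DependsOnly {m}ᶜ {m}ᶜ G)
    (a₀ : Fin (n+1) → A) (b₀ : Fin (n+1) → B) :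
    ∑ a, ∑ b, G a b * (Q m a b * P m a b)
      = ∑ a, ∑ b, if a m = a₀ m ∧ b m = b₀ m then G a b else 0 := by
  have hm : m ∉ ({m}ᶜ : Finset (Fin (n+1))) := by simp
  calc ∑ a, ∑ b, G a b * (Q m a b * P m a b)
      = ∑ a, ∑ b, (G a b * P m a b) * Q m a b := by simp only [mul_comm, mul_left_comm]
    _ = ∑ a, ∑ b, if b m = b₀ m then G a b * P m a b else 0 := by
        refine Finset.sum_congr rfl fun a _ =>
          sum_mul_eq_sum_ite_of_sum_update_eq_one m (b₀ m) (fun b y => ?_) (hQ.2.1 m a)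
        rw [hG.update_right hm, (hP.dependsOnly m).update_right (self_notMem_idxLt m)]
    _ = ∑ b, ∑ a, (if b m = b₀ m then G a b else 0) * P m a b := by
        rw [Finset.sum_comm]
        simp only [ite_mul, zero_mul]
    _ = ∑ b, ∑ a, if a m = a₀ m then (if b m = b₀ m then G a b else 0) else 0 := by
        refine Finset.sum_congr rfl fun b _ =>
          sum_mul_eq_sum_ite_of_sum_update_eq_one m (a₀ m) (fun a x => ?_) (hP.2.1 m · b)
        simp only [hG.update_left hm]
    _ = _ := by
        rw [Finset.sum_comm]
        simp only [ite_and]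

-- The kernels in `T` are summed out latest first: each is normalised and depends on no later
-- coordinate.
theorem sum_mul_prod_kernel_eq_marg (hQ : IsChannel Q) (hP : IsInput P) (T : Finset (Fin (n+1)))
    {g : (Fin (n+1) → A) → (Fin (n+1) → B) → ℝ} (hg : DependsOnly Tᶜ Tᶜ g)
    (a₀ : Fin (n+1) → A) (b₀ : Fin (n+1) → B) :
    ∑ a, ∑ b, g a b * ∏ j ∈ T, Q j a b * P j a b = marg g T T a₀ b₀ := by
  induction T using Finset.induction_on_min generalizing g with
  | empty => simp [marg]
  | insert m T hlt ih =>
    have hm : m ∉ T := fun h => lt_irrefl m (hlt m h)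
    have hK : idxLe n m ⊆ Tᶜ := fun j hj => Finset.mem_compl.2 fun hjT =>
      (hlt j hjT).not_ge (mem_idxLe.1 hj)
    have hgK := (hg.mono (Finset.compl_subset_compl.2 (Finset.subset_insert m T))
      (Finset.compl_subset_compl.2 (Finset.subset_insert m T))).mul
      ((dependsOnly_kernel hQ hP m).mono hK hK)
    have hG : DependsOnly {m}ᶜ {m}ᶜ fun a b =>
        if (∀ j ∈ T, a j = a₀ j) ∧ ∀ j ∈ T, b j = b₀ j then g a b else 0 := by
      have hT : T ⊆ {m}ᶜ := fun j hj => by simpa using ne_of_mem_of_not_mem hj hm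
      have hsub : (insert m T)ᶜ ⊆ {m}ᶜ := Finset.compl_subset_compl.2 (by simp)
      exact (hg.mono hsub hsub).ite_eqOn hT hT a₀ b₀
    calc ∑ a, ∑ b, g a b * ∏ j ∈ insert m T, Q j a b * P j a b
        = ∑ a, ∑ b, (g a b * (Q m a b * P m a b)) * ∏ j ∈ T, Q j a b * P j a b := by
          simp only [Finset.prod_insert hm, mul_assoc]
      _ = ∑ a, ∑ b, (if (∀ j ∈ T, a j = a₀ j) ∧ ∀ j ∈ T, b j = b₀ j then g a b else 0) *
            (Q m a b * P m a b) := by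
          rw [ih hgK]
          simp only [marg, ite_mul, zero_mul]
      _ = marg g (insert m T) (insert m T) a₀ b₀ := by
          rw [sum_mul_kernel_eq_sum_ite hQ hP m hG a₀ b₀]
          simp only [marg, Finset.forall_mem_insert, and_and_and_comm, ← ite_and]

theorem marg_joint_empty_empty (hQ : IsChannel Q) (hP : IsInput P) (a : Fin (n+1) → A)
    (b : Fin (n+1) → B) : marg (joint Q P) ∅ ∅ a b = 1 := by
  have h := sum_mul_prod_kernel_eq_marg hQ hP Finset.univ (g := fun _ _ => 1)
    (fun _ _ _ _ _ _ => rfl) a b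
  simp only [one_mul] at h
  simp [marg, joint, h, ← funext_iff, ite_and]

theorem marg_joint_idxLe (hQ : IsChannel Q) (hP : IsInput P) {TA : Finset (Fin (n+1))}
    {i : Fin (n+1)} (hTA : TA ⊆ idxLe n i) (a : Fin (n+1) → A) (b : Fin (n+1) → B) :
    marg (joint Q P) TA (idxLe n i) a b
      = ∑ a', if (∀ j ∈ TA, a' j = a j) ∧ ∀ j ∈ (idxLe n i)ᶜ, a' j = a j
          then ∏ j ∈ idxLe n i, Q j a' b * P j a' b else 0 := by
  have hg := (DependsOnly.prod fun j hj => (dependsOnly_kernel hQ hP j).mono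
    (fun k hk => mem_idxLe.2 ((mem_idxLe.1 hk).trans (mem_idxLe.1 hj)))
    (fun k hk => mem_idxLe.2 ((mem_idxLe.1 hk).trans (mem_idxLe.1 hj)))).ite_eqOn hTA le_rfl a b
  have h := sum_mul_prod_kernel_eq_marg hQ hP (idxLe n i)ᶜ
    (hg.mono (compl_compl _).ge (compl_compl _).ge) a b
  simp only [ite_mul, zero_mul, Finset.prod_mul_prod_compl] at h
  rw [marg]
  simp only [joint, h, marg]
  refine Finset.sum_congr rfl fun a' _ => ?_
  rw [Finset.sum_eq_single b (fun b' _ hb' => ?_) (by simp)]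
  · split_ifs <;> first | rfl | tauto
  · split_ifs with h₁ h₂ <;> try rfl
    exact absurd (funext fun j => by
      by_cases hj : j ∈ idxLe n i; exacts [h₂.2 j hj, h₁.2 j (Finset.mem_compl.2 hj)]) hb'

theorem marg_joint_idxLt (hQ : IsChannel Q) (hP : IsInput P) {TA : Finset (Fin (n+1))}
    {i : Fin (n+1)} (hTA : TA ⊆ idxLe n i) (a : Fin (n+1) → A) (b : Fin (n+1) → B) :
    marg (joint Q P) TA (idxLt n i) a b
      = ∑ a', if (∀ j ∈ TA, a' j = a j) ∧ ∀ j ∈ (idxLe n i)ᶜ, a' j = a j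
          then (∏ j ∈ idxLt n i, Q j a' b * P j a' b) * P i a' b else 0 := by
  rw [marg_eq_sum_marg_insert_right (self_notMem_idxLt i), insert_idxLt]
  simp only [marg_joint_idxLe hQ hP hTA]
  rw [Finset.sum_comm]
  refine Finset.sum_congr rfl fun a' _ => ?_
  split_ifs
  · have hprod := (dependsOnly_prod_idxLt hQ hP i).update_right (self_notMem_idxLt i) a' b
    have hPi := (hP.dependsOnly i).update_right (self_notMem_idxLt i) a' b
    simp only [prod_idxLe, hprod, hPi, ← Finset.mul_sum, ← Finset.sum_mul, hQ.2.1, one_mul]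
  · simp

theorem marg_joint_idxLe_eq_mul (hQ : IsChannel Q) (hP : IsInput P) (hQA : IsClassA Q)
    {TA : Finset (Fin (n+1))} {i : Fin (n+1)} (hi : i ∈ TA) (hTA : TA ⊆ idxLe n i)
    (a : Fin (n+1) → A) (b : Fin (n+1) → B) :
    marg (joint Q P) TA (idxLe n i) a b = Q i a b * marg (joint Q P) TA (idxLt n i) a b := by
  rw [marg_joint_idxLe hQ hP hTA, marg_joint_idxLt hQ hP hTA, Finset.mul_sum]
  refine Finset.sum_congr rfl fun a' _ => ?_
  split_ifs with h
  · rw [prod_idxLe, hQA i a' a b b (h.1 i hi) fun _ _ => rfl]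
    ring
  · rw [mul_zero]

theorem marg_joint_singleton_idxLt_of_restricted (hQ : IsChannel Q) (hP : IsInput P)
    (hres : ∀ (i : Fin (n+1)) (a a' : Fin (n+1) → A) (b : Fin (n+1) → B),
      a i = a' i → P i a b = P i a' b) (i : Fin (n+1)) (a : Fin (n+1) → A) (b : Fin (n+1) → B) :
    marg (joint Q P) {i} (idxLt n i) a b = P i a b * marg (joint Q P) ∅ (idxLt n i) a b := by
  have hi : {i} ⊆ idxLe n i := by simp [mem_idxLe]
  have hprod := (dependsOnly_prod_idxLt hQ hP i).update_left (self_notMem_idxLt i)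
  rw [marg_joint_idxLt hQ hP hi, marg_joint_idxLt hQ hP (Finset.empty_subset _)]
  simp only [Finset.mem_singleton, forall_eq, Finset.notMem_empty, IsEmpty.forall_iff, implies_true,
    true_and, ← ite_zero_mul]
  rw [eq_comm, sum_mul_eq_sum_ite_of_sum_update_eq_one i (a i) (fun a' x => ?_) (hP.2.1 i · b),
    Finset.mul_sum]
  · refine Finset.sum_congr rfl fun a' _ => ?_
    by_cases h : a' i = a i
    · simp [h, hres i a' a b h, mul_comm]
    · simp [h]
  · have hi' : i ∉ (idxLe n i)ᶜ := by simp [mem_idxLe]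
    simp only [hprod]
    refine if_congr (forall₂_congr fun j hj => ?_) rfl rfl
    rw [update_of_ne (ne_of_mem_of_not_mem hj hi')]

theorem cmi_joint_idxLe_eq_cmi_singleton (hQ : IsChannel Q) (hP : IsInput P) (hQA : IsClassA Q)
    (i : Fin (n+1)) :
    cmi (joint Q P) (idxLe n i) i (idxLt n i) = cmi (joint Q P) {i} i (idxLt n i) := by
  have hμ := joint_nonneg hQ hP
  have cancel (q m z w : ℝ) (hm : m ≠ 0) : q * m * z / (m * w) = q * z / w := by
    rw [mul_right_comm, mul_comm m w, mul_div_mul_right _ _ hm]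
  have hi : {i} ⊆ idxLe n i := by simp [mem_idxLe]
  unfold cmi
  rw [insert_idxLt]
  refine Finset.sum_congr rfl fun a _ => Finset.sum_congr rfl fun b _ => ?_
  rcases (hμ a b).eq_or_lt with h0 | hpos
  · rw [← h0, zero_mul, zero_mul]
  rw [marg_joint_idxLe_eq_mul hQ hP hQA (mem_idxLe.2 le_rfl) le_rfl,
    marg_joint_idxLe_eq_mul hQ hP hQA (Finset.mem_singleton_self i) hi,
    cancel _ _ _ _ (hpos.trans_le (le_marg hμ a b)).ne',
    cancel _ _ _ _ (hpos.trans_le (le_marg hμ a b)).ne']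

theorem DI_joint_eq_sum_cmi_singleton (hQ : IsChannel Q) (hP : IsInput P)
    (hQA : IsClassA Q) :
    DI (joint Q P) = ∑ i : Fin (n+1), cmi (joint Q P) {i} i (idxLt n i) :=
  Finset.sum_congr rfl fun i _ => cmi_joint_idxLe_eq_cmi_singleton hQ hP hQA i

/-- `π_i(a_i | b^{i-1})`: the conditional law of `A_i` given `B^{i-1}` under `joint Q P`. -/
noncomputable def inducedInput (Q P : Fin (n+1) → (Fin (n+1) → A) → (Fin (n+1) → B) → ℝ) :
    Fin (n+1) → (Fin (n+1) → A) → (Fin (n+1) → B) → ℝ :=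
  fun i a b => if marg (joint Q P) ∅ (idxLt n i) a b = 0 then (Fintype.card A : ℝ)⁻¹
    else marg (joint Q P) {i} (idxLt n i) a b / marg (joint Q P) ∅ (idxLt n i) a b

theorem inducedInput_dependsOnly (i : Fin (n+1)) :
    DependsOnly {i} (idxLt n i) (inducedInput Q P i) := by
  intro a a' b b' ha hb
  have hβ : marg (joint Q P) ∅ (idxLt n i) a b = marg (joint Q P) ∅ (idxLt n i) a' b' :=
    marg_dependsOnly (by simp) hb
  simp only [inducedInput, marg_dependsOnly ha hb, hβ]

theorem inducedInput_restricted (i : Fin (n+1)) (a a' : Fin (n+1) → A) (b : Fin (n+1) → B)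
    (h : a i = a' i) : inducedInput Q P i a b = inducedInput Q P i a' b :=
  inducedInput_dependsOnly i (by simpa using h) fun _ _ => rfl

theorem isInput_inducedInput (hQ : IsChannel Q) (hP : IsInput P) :
    IsInput (inducedInput Q P) := by
  have hμ := joint_nonneg hQ hP
  refine ⟨fun i a b => ?_, fun i a b => ?_, fun i a a' b b' ha hb => ?_⟩
  · unfold inducedInput
    split
    · positivity
    · exact div_nonneg (marg_nonneg hμ a b) (marg_nonneg hμ a b)
  · have : Nonempty A := ⟨a 0⟩
    have hβ (x : A) : marg (joint Q P) ∅ (idxLt n i) (update a i x) b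
        = marg (joint Q P) ∅ (idxLt n i) a b :=
      marg_dependsOnly (by simp) fun _ _ => rfl
    by_cases h0 : marg (joint Q P) ∅ (idxLt n i) a b = 0
    · simp [inducedInput, hβ, h0]
    · simp only [inducedInput, hβ, h0, if_false, ← Finset.sum_div]
      rw [← Finset.insert_empty, ← marg_eq_sum_marg_insert_left (Finset.notMem_empty i), div_self h0]
  · exact inducedInput_dependsOnly i (fun j hj => ha j (by simp_all))
      (fun j hj => hb j (mem_idxLt.1 hj))

theorem marg_joint_singleton_idxLt_eq_inducedInput_mul (hQ : IsChannel Q) (hP : IsInput P)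
    (i : Fin (n+1)) (a : Fin (n+1) → A) (b : Fin (n+1) → B) :
    marg (joint Q P) {i} (idxLt n i) a b
      = inducedInput Q P i a b * marg (joint Q P) ∅ (idxLt n i) a b := by
  have hμ := joint_nonneg hQ hP
  by_cases h0 : marg (joint Q P) ∅ (idxLt n i) a b = 0
  · rw [h0, mul_zero]
    exact le_antisymm (h0 ▸ marg_anti hμ (Finset.empty_subset _) a b) (marg_nonneg hμ a b)
  · rw [inducedInput, if_neg h0, div_mul_cancel₀ _ h0]

theorem marg_joint_inducedInput_singleton_idxLe (hQ : IsChannel Q) (hP : IsInput P)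
    (hQA : IsClassA Q) (i : Fin (n+1))
    (h : ∀ a b, marg (joint Q P) ∅ (idxLt n i) a b
      = marg (joint Q (inducedInput Q P)) ∅ (idxLt n i) a b)
    (a : Fin (n+1) → A) (b : Fin (n+1) → B) :
    marg (joint Q P) {i} (idxLe n i) a b
      = marg (joint Q (inducedInput Q P)) {i} (idxLe n i) a b := by
  have hi : {i} ⊆ idxLe n i := by simp [mem_idxLe]
  have hπ := isInput_inducedInput hQ hP
  rw [marg_joint_idxLe_eq_mul hQ hP hQA (Finset.mem_singleton_self i) hi,
    marg_joint_idxLe_eq_mul hQ hπ hQA (Finset.mem_singleton_self i) hi,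
    marg_joint_singleton_idxLt_eq_inducedInput_mul hQ hP, h,
    marg_joint_singleton_idxLt_of_restricted hQ hπ inducedInput_restricted]

theorem marg_joint_inducedInput_idxLt (hQ : IsChannel Q) (hP : IsInput P) (hQA : IsClassA Q)
    (i : Fin (n+1)) (a : Fin (n+1) → A) (b : Fin (n+1) → B) :
    marg (joint Q P) ∅ (idxLt n i) a b = marg (joint Q (inducedInput Q P)) ∅ (idxLt n i) a b := by
  induction i using Fin.induction generalizing a b with
  | zero =>
    rw [idxLt_zero, marg_joint_empty_empty hQ hP, marg_joint_empty_empty hQ (isInput_inducedInput hQ hP)]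
  | succ i ih =>
    simp only [idxLt_succ, marg_eq_sum_marg_insert_left (Finset.notMem_empty i.castSucc),
      Finset.insert_empty, marg_joint_inducedInput_singleton_idxLe hQ hP hQA _ ih]

theorem DI_joint_inducedInput (hQ : IsChannel Q) (hP : IsInput P) (hQA : IsClassA Q) :
    DI (joint Q P) = DI (joint Q (inducedInput Q P)) := by
  rw [DI_joint_eq_sum_cmi_singleton hQ hP hQA,
    DI_joint_eq_sum_cmi_singleton hQ (isInput_inducedInput hQ hP) hQA]
  refine Finset.sum_congr rfl fun i _ => cmi_congr fun a b => ?_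
  rw [insert_idxLt]
  exact marg_joint_inducedInput_singleton_idxLe hQ hP hQA i
    (marg_joint_inducedInput_idxLt hQ hP hQA i) a b

end Joint

/-- for a Class A channel, the supremum of directed information over all
feedback input kernels equals the supremum over input kernels of the form
`π_i(a_i | b^{i-1})` (no dependence on past inputs), and for such restricted inputs
`I(A^n → B^n) = ∑_i I(A_i; B_i | B^{i-1})`. -/
theorem stmt3 (Q : Fin (n+1) → (Fin (n+1) → A) → (Fin (n+1) → B) → ℝ)
    (hQ : IsChannel Q)
    (hQA : ∀ (i : Fin (n+1)) (a a' : Fin (n+1) → A) (b b' : Fin (n+1) → B),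
      a i = a' i → (∀ j : Fin (n+1), (j:ℕ) ≤ (i:ℕ) → b j = b' j) → Q i a b = Q i a' b') :
    sSup {x : ℝ | ∃ P : Fin (n+1) → (Fin (n+1) → A) → (Fin (n+1) → B) → ℝ,
        IsInput P ∧ x = DI (joint Q P)}
      = sSup {x : ℝ | ∃ P : Fin (n+1) → (Fin (n+1) → A) → (Fin (n+1) → B) → ℝ,
          IsInput P ∧
          (∀ (i : Fin (n+1)) (a a' : Fin (n+1) → A) (b : Fin (n+1) → B),
            a i = a' i → P i a b = P i a' b) ∧
          x = DI (joint Q P)}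
    ∧ ∀ P : Fin (n+1) → (Fin (n+1) → A) → (Fin (n+1) → B) → ℝ,
        IsInput P →
        (∀ (i : Fin (n+1)) (a a' : Fin (n+1) → A) (b : Fin (n+1) → B),
          a i = a' i → P i a b = P i a' b) →
        DI (joint Q P) = ∑ i : Fin (n+1), cmi (joint Q P) {i} i (idxLt n i) := by
  refine ⟨congrArg sSup (Set.ext fun x => ⟨?_, ?_⟩), fun P hP _ => DI_joint_eq_sum_cmi_singleton hQ hP hQA⟩
  · rintro ⟨P, hP, rfl⟩
    exact ⟨inducedInput Q P, isInput_inducedInput hQ hP, inducedInput_restricted,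
      DI_joint_inducedInput hQ hP hQA⟩
  · rintro ⟨P, hP, -, rfl⟩
    exact ⟨P, hP, rfl⟩
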